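/- arXiv:0705.4261 — 3 statements merged into one kernel-verified Lean document; each statement's English description precedes it below -/
import Mathlib

section
/- Every quasi-independent subset of ℤ is a Sidon set. -/
open scoped BigOperators

/-- `Λ ⊆ ℤ` is a Sidon set. -/
def IsSidonSet (Λ : Set ℤ) : Prop :=
  ∃ C : ℝ, ∀ F : Finset ℤ, (F : Set ℤ) ⊆ Λ → ∀ a : ℤ → ℂ,
    ∑ l ∈ F, ‖a l‖ ≤
      C * ⨆ t : ℝ, ‖∑ l ∈ F, a l * Complex.exp (Complex.I * l * t)‖

/-- `Λ ⊆ ℤ \ {0}` is quasi-independent: the only relation `∑_{λ∈F} ε_λ λ = 0`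
with `ε_λ ∈ {-1,0,1}` is the trivial one. -/
def QuasiIndependent (Λ : Set ℤ) : Prop :=
  0 ∉ Λ ∧ ∀ F : Finset ℤ, (F : Set ℤ) ⊆ Λ → ∀ ε : ℤ → ℤ,
    (∀ l ∈ F, ε l = -1 ∨ ε l = 0 ∨ ε l = 1) →
    ∑ l ∈ F, ε l * l = 0 → ∀ l ∈ F, ε l = 0

/-!
Riesz products. Write `a i = ‖a i‖ * u i` with `‖u i‖ = 1` and form the nonnegative trigonometric
polynomial `P t = ∏ i, (1 + Re (u i * exp (I * n i * t)) / 2)`. Expanding the product, its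
frequencies are the signed sums `ε ⬝ᵥ n` of sign vectors `ε : ι → {-1, 0, 1}`, with coefficients
of modulus `4⁻¹ ^ |ε|`. Quasi-independence says that two distinct sign vectors with the same
signed sum take opposite nonzero values somewhere. Hence `ε = 0` is the only one with sum `0`,
so `P` has mean one; and the sign vectors with sum `-n i` have pairwise disjoint cylinders in
`{-1, 1}^ι`, so `∑ 2⁻¹ ^ |ε| ≤ 1` over them. Besides `-Pi.single i 1`, which contributes
`(u i)⁻¹ / 4`, they all equal `1` at `i` and differ from `Pi.single i 1` (as `n i ≠ 0`), so
they have size at least two; thus the coefficient of `P` at `-n i` is `(u i)⁻¹ / 4` up to an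
error `1 / 8`. Pairing `f t = ∑ i, a i * exp (I * n i * t)` with `P` then gives
`∑ ‖a i‖ / 8 ≤ ‖mean (f * P)‖ ≤ sup ‖f‖ * mean P = sup ‖f‖`.
Means of trigonometric polynomials are computed exactly by sampling at the `N`-th roots of
unity, for `N` larger than every frequency involved.
-/

open Complex Finset
open scoped Matrix

lemma norm_exp_I_mul_intCast_mul_ofReal (m : ℤ) (t : ℝ) : ‖exp (I * m * t)‖ = 1 := by
  rw [mul_assoc, ← ofReal_intCast, ← ofReal_mul, norm_exp_I_mul_ofReal]

lemma sum_range_exp_eq_ite_dvd {N : ℕ} (hN : N ≠ 0) (m : ℤ) :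
    ∑ j ∈ range N, exp (I * m * ↑(2 * Real.pi * j / N)) = if (N : ℤ) ∣ m then (N : ℂ) else 0 := by
  set ζ := exp (2 * Real.pi * I / N)
  have hζ : IsPrimitiveRoot ζ N := isPrimitiveRoot_exp N hN
  have hterm : ∀ j : ℕ, exp (I * m * ↑(2 * Real.pi * j / N)) = (ζ ^ m) ^ j := by
    intro j
    rw [← exp_int_mul, ← exp_nat_mul]
    push_cast
    ring_nf
  simp_rw [hterm]
  split_ifs with hdvd
  · simp [(hζ.zpow_eq_one_iff_dvd m).2 hdvd]
  · have hne : ζ ^ m ≠ 1 := fun h => hdvd ((hζ.zpow_eq_one_iff_dvd m).1 h)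
    rw [geom_sum_eq hne, ← zpow_natCast, ← zpow_mul, mul_comm, zpow_mul, zpow_natCast,
      hζ.pow_eq_one, one_zpow, sub_self, zero_div]

lemma sum_range_exp_eq_ite_eq_zero {N : ℕ} {m : ℤ} (hm : |m| < N) :
    ∑ j ∈ range N, exp (I * m * ↑(2 * Real.pi * j / N)) = if m = 0 then (N : ℂ) else 0 := by
  have hN : N ≠ 0 := by rintro rfl; exact absurd hm (by simp)
  rw [sum_range_exp_eq_ite_dvd hN]
  congr 1
  exact propext ⟨fun h => Int.eq_zero_of_abs_lt_dvd h hm, fun h => h ▸ dvd_zero _⟩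

lemma sum_range_sum_mul_exp_eq {κ : Type*} {N : ℕ} (s : Finset κ) (c : κ → ℂ) (m : κ → ℤ)
    (hm : ∀ k ∈ s, |m k| < N) :
    ∑ j ∈ range N, ∑ k ∈ s, c k * exp (I * m k * ↑(2 * Real.pi * j / N)) =
      N * ∑ k ∈ s with m k = 0, c k := by
  rw [sum_comm, sum_filter, mul_sum]
  refine sum_congr rfl fun k hk => ?_
  rw [← mul_sum, sum_range_exp_eq_ite_eq_zero (hm k hk)]
  split_ifs <;> ring

lemma norm_sum_mul_coeff_neg_le_of_nonneg {ι κ : Type*} [Fintype ι] (a : ι → ℂ) (n : ι → ℤ) {M : ℝ}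
    (hM : ∀ t : ℝ, ‖∑ i, a i * exp (I * n i * t)‖ ≤ M)
    (s : Finset κ) (c : κ → ℂ) (m : κ → ℤ) (P : ℝ → ℝ)
    (hP : ∀ t : ℝ, (P t : ℂ) = ∑ k ∈ s, c k * exp (I * m k * t)) (hP_nonneg : ∀ t, 0 ≤ P t)
    (hP_mean : ∑ k ∈ s with m k = 0, c k = 1) :
    ‖∑ i, a i * ∑ k ∈ s with m k = -n i, c k‖ ≤ M := by
  set N : ℕ := ∑ i, (n i).natAbs + ∑ k ∈ s, (m k).natAbs + 1
  have hN : (0 : ℝ) < N := by positivity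
  set t : ℕ → ℝ := fun j => 2 * Real.pi * j / N
  have hn_le : ∀ i, (n i).natAbs ≤ ∑ i, (n i).natAbs := fun i =>
    single_le_sum (f := fun i => (n i).natAbs) (fun i _ => Nat.zero_le _) (mem_univ i)
  have hm_le : ∀ k ∈ s, (m k).natAbs ≤ ∑ k ∈ s, (m k).natAbs := fun k hk =>
    single_le_sum (f := fun k => (m k).natAbs) (fun k _ => Nat.zero_le _) hk
  have hP_sum : ∑ j ∈ range N, P (t j) = N := by
    have h := sum_range_sum_mul_exp_eq (N := N) s c m fun k hk => by
      have := hm_le k hk; rw [Int.abs_eq_natAbs]; omega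
    rw [hP_mean, mul_one] at h
    exact_mod_cast (show (∑ j ∈ range N, P (t j) : ℂ) = N by push_cast [hP]; exact h)
  have hfP : ∑ j ∈ range N, (∑ i, a i * exp (I * n i * t j)) * P (t j) =
      N * ∑ i, a i * ∑ k ∈ s with m k = -n i, c k := by
    have hprod : ∀ τ : ℝ, (∑ i, a i * exp (I * n i * τ)) * P τ =
        ∑ ik ∈ univ ×ˢ s, (a ik.1 * c ik.2) * exp (I * ↑(n ik.1 + m ik.2) * τ) := by
      intro τ
      rw [hP, sum_mul_sum, sum_product]
      refine sum_congr rfl fun i _ => sum_congr rfl fun k _ => ?_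
      push_cast
      rw [mul_add, add_mul, exp_add]
      ring
    simp_rw [hprod]
    rw [sum_range_sum_mul_exp_eq _ _ _ fun ik hik => ?_]
    · rw [sum_filter, sum_product]
      simp_rw [mul_sum, sum_filter, ← neg_eq_iff_add_eq_zero, eq_comm (a := -n _)]
      refine sum_congr rfl fun i _ => sum_congr rfl fun k _ => ?_
      split_ifs <;> simp
    · have := hn_le ik.1; have := hm_le ik.2 (mem_product.1 hik).2
      rw [Int.abs_eq_natAbs]
      omega
  have hbound : ‖(N : ℂ) * ∑ i, a i * ∑ k ∈ s with m k = -n i, c k‖ ≤ M * N := by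
    rw [← hfP, ← hP_sum, mul_sum]
    refine (norm_sum_le _ _).trans (sum_le_sum fun j _ => ?_)
    rw [norm_mul, norm_real, Real.norm_of_nonneg (hP_nonneg _)]
    exact mul_le_mul_of_nonneg_right (hM _) (hP_nonneg _)
  rw [norm_mul, Complex.norm_natCast, mul_comm M] at hbound
  exact le_of_mul_le_mul_left hbound hN

section SignVectors

variable {ι : Type*}

def SignConflict (ε η : ι → ℤ) : Prop :=
  ∃ i, ε i * η i = -1

variable [Fintype ι]

def signSize (ε : ι → ℤ) : ℕ :=
  ∑ i, (ε i).natAbs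

variable [DecidableEq ι]

variable (ι) in
def signVectors : Finset (ι → ℤ) :=
  Fintype.piFinset fun _ => {-1, 0, 1}

def signCylinder (ε : ι → ℤ) : Finset (ι → ℤ) :=
  Fintype.piFinset fun i => if ε i = 0 then {-1, 1} else {ε i}

lemma mem_signVectors {ε : ι → ℤ} : ε ∈ signVectors ι ↔ ∀ i, ε i = -1 ∨ ε i = 0 ∨ ε i = 1 := by
  simp [signVectors]

lemma card_signCylinder {ε : ι → ℤ} (hε : ε ∈ signVectors ι) :
    ((signCylinder ε).card : ℝ) = 2 ^ Fintype.card ι * (1 / 2) ^ signSize ε := by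
  rw [signCylinder, Fintype.card_piFinset, Nat.cast_prod, signSize, ← prod_pow_eq_pow_sum,
    ← card_univ, ← prod_const, ← prod_mul_distrib]
  refine prod_congr rfl fun i _ => ?_
  rcases mem_signVectors.1 hε i with h | h | h <;> simp [h]

lemma disjoint_signCylinder {ε η : ι → ℤ} (h : SignConflict ε η) :
    Disjoint (signCylinder ε) (signCylinder η) := by
  obtain ⟨i, hi⟩ := h
  refine disjoint_left.2 fun σ hσε hση => ?_
  have hε : ε i ≠ 0 := by rintro h; simp [h] at hi
  have hη : η i ≠ 0 := by rintro h; simp [h] at hi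
  simp only [signCylinder, Fintype.mem_piFinset] at hσε hση
  have h1 := hσε i
  have h2 := hση i
  simp only [hε, hη, if_false, mem_singleton] at h1 h2
  rw [← h1, ← h2] at hi
  nlinarith [mul_self_nonneg (σ i)]

lemma signCylinder_subset {ε : ι → ℤ} (hε : ε ∈ signVectors ι) :
    signCylinder ε ⊆ Fintype.piFinset fun _ => {-1, 1} := by
  refine Fintype.piFinset_subset _ _ fun i => ?_
  rcases mem_signVectors.1 hε i with h | h | h <;> simp [h]

theorem sum_half_pow_signSize_le_one {E : Finset (ι → ℤ)} (hE : E ⊆ signVectors ι)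
    (hconf : (E : Set (ι → ℤ)).Pairwise SignConflict) :
    ∑ ε ∈ E, (1 / 2 : ℝ) ^ signSize ε ≤ 1 := by
  have hcard : ∑ ε ∈ E, ((signCylinder ε).card : ℝ) ≤ 2 ^ Fintype.card ι := by
    rw [← Nat.cast_sum, ← card_biUnion (hconf.mono' fun _ _ h => disjoint_signCylinder h)]
    calc ((E.biUnion signCylinder).card : ℝ)
        ≤ (Fintype.piFinset fun _ : ι => ({-1, 1} : Finset ℤ)).card := by
          exact_mod_cast card_le_card (biUnion_subset.2 fun ε hε => signCylinder_subset (hE hε))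
      _ = 2 ^ Fintype.card ι := by simp
  rw [sum_congr rfl fun ε hε => card_signCylinder (hE hε), ← mul_sum] at hcard
  have : (0 : ℝ) < 2 ^ Fintype.card ι := by positivity
  nlinarith

def QuasiIndependentFamily (n : ι → ℤ) : Prop :=
  ∀ ε ∈ signVectors ι, ε ⬝ᵥ n = 0 → ε = 0

lemma single_mem_signVectors (i : ι) {k : ℤ} (hk : k = -1 ∨ k = 0 ∨ k = 1) :
    Pi.single i k ∈ signVectors ι := by
  refine mem_signVectors.2 fun j => ?_
  rcases eq_or_ne j i with rfl | h
  · simpa using hk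
  · simp [h]

lemma two_le_signSize {ε : ι → ℤ} (n : ι → ℤ) {i : ι} (hi : ε i = 1)
    (hne : ε ⬝ᵥ n ≠ n i) : 2 ≤ signSize ε := by
  by_contra! hlt
  have hsize : signSize ε = 1 + ∑ j ∈ univ.erase i, (ε j).natAbs := by
    rw [signSize, ← add_sum_erase _ _ (mem_univ i), hi, Int.natAbs_one]
  have hrest0 : ∑ j ∈ univ.erase i, (ε j).natAbs = 0 := by omega
  have hrest : ∀ j ∈ univ.erase i, ε j = 0 := fun j hj =>
    Int.natAbs_eq_zero.1 (sum_eq_zero_iff.1 hrest0 j hj)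
  refine hne ?_
  rw [dotProduct, ← add_sum_erase _ _ (mem_univ i), hi, one_mul, add_eq_left]
  exact sum_eq_zero fun j hj => by rw [hrest j hj, zero_mul]

namespace QuasiIndependentFamily

variable {n : ι → ℤ}

lemma ne_zero (hn : QuasiIndependentFamily n) (i : ι) : n i ≠ 0 := by
  intro h
  have := hn (Pi.single i 1) (single_mem_signVectors i (by norm_num))
    (by rw [single_dotProduct, h, mul_zero])
  simpa using congr_fun this i

lemma eq_of_dotProduct_eq (hn : QuasiIndependentFamily n) {ε η : ι → ℤ} (hε : ε ∈ signVectors ι)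
    (hη : η ∈ signVectors ι) (h : ε ⬝ᵥ n = η ⬝ᵥ n) (hc : ¬ SignConflict ε η) : ε = η := by
  have hsub : ε - η ∈ signVectors ι := by
    refine mem_signVectors.2 fun i => ?_
    have hci : ε i * η i ≠ -1 := fun h => hc ⟨i, h⟩
    rcases mem_signVectors.1 hε i with h1 | h1 | h1 <;>
      rcases mem_signVectors.1 hη i with h2 | h2 | h2 <;> simp_all
  exact sub_eq_zero.1 (hn _ hsub (by rw [sub_dotProduct, h, sub_self]))

lemma pairwise_signConflict (hn : QuasiIndependentFamily n) (m : ℤ) :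
    ((signVectors ι).filter (· ⬝ᵥ n = m) : Set (ι → ℤ)).Pairwise SignConflict := by
  intro ε hε η hη hne
  simp only [coe_filter, Set.mem_ofPred_eq] at hε hη
  by_contra hc
  exact hne (hn.eq_of_dotProduct_eq hε.1 hη.1 (hε.2.trans hη.2.symm) hc)

end QuasiIndependentFamily

lemma QuasiIndependent.quasiIndependentFamily {Λ : Set ℤ} (h : QuasiIndependent Λ) {F : Finset ℤ}
    (hF : (F : Set ℤ) ⊆ Λ) : QuasiIndependentFamily ((↑) : F → ℤ) := by
  intro ε hε hsum
  set ε' : ℤ → ℤ := fun l => if hl : l ∈ F then ε ⟨l, hl⟩ else 0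
  have hε' : ∀ l : F, ε' l = ε l := fun l => dif_pos l.2
  have hzero := h.2 F hF ε' (fun l hl => by simpa [ε', hl] using mem_signVectors.1 hε ⟨l, hl⟩)
    (by rw [← sum_coe_sort]; simp only [hε']; exact hsum)
  funext l
  rw [← hε', Pi.zero_apply, hzero l l.2]

end SignVectors

section RieszProduct

variable {ι : Type*} [Fintype ι]

noncomputable def rieszProduct (w : ℝ) (u : ι → ℂ) (n : ι → ℤ) (t : ℝ) : ℝ :=
  ∏ i, (1 + 2 * w * (u i * exp (I * n i * t)).re)

noncomputable def rieszCoeff (w : ℝ) (u : ι → ℂ) (ε : ι → ℤ) : ℂ :=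
  ∏ i, (w : ℂ) ^ (ε i).natAbs * u i ^ ε i

lemma ofReal_one_add_two_mul_re {z : ℂ} (hz : ‖z‖ = 1) (w : ℝ) :
    ((1 + 2 * w * z.re : ℝ) : ℂ) = ∑ k ∈ ({-1, 0, 1} : Finset ℤ), (w : ℂ) ^ k.natAbs * z ^ k := by
  rw [sum_insert (by decide), sum_insert (by decide), sum_singleton, _root_.zpow_neg_one,
    inv_eq_conj hz, zpow_zero, zpow_one]
  have := add_conj z
  push_cast at this ⊢
  linear_combination -(w : ℂ) * this

variable {w : ℝ} {u : ι → ℂ}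

lemma rieszProduct_nonneg (hw₀ : 0 ≤ w) (hw : w ≤ 1 / 2) (hu : ∀ i, ‖u i‖ ≤ 1) (n : ι → ℤ) (t : ℝ) :
    0 ≤ rieszProduct w u n t := by
  refine prod_nonneg fun i _ => ?_
  have hre : |(u i * exp (I * n i * t)).re| ≤ 1 := by
    refine (abs_re_le_norm _).trans ?_
    rw [norm_mul, norm_exp_I_mul_intCast_mul_ofReal, mul_one]
    exact hu i
  nlinarith [abs_le.1 hre]

lemma ofReal_rieszProduct [DecidableEq ι] (hu : ∀ i, ‖u i‖ = 1) (n : ι → ℤ) (t : ℝ) :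
    (rieszProduct w u n t : ℂ) =
      ∑ ε ∈ signVectors ι, rieszCoeff w u ε * exp (I * ↑(ε ⬝ᵥ n) * t) := by
  have hz : ∀ i, ‖u i * exp (I * n i * t)‖ = 1 := fun i => by
    rw [norm_mul, hu, norm_exp_I_mul_intCast_mul_ofReal, one_mul]
  rw [rieszProduct, ofReal_prod]
  simp_rw [ofReal_one_add_two_mul_re (hz _)]
  rw [prod_univ_sum]
  refine sum_congr rfl fun ε _ => ?_
  simp_rw [mul_zpow, ← exp_int_mul, ← mul_assoc]
  rw [prod_mul_distrib, ← exp_sum, rieszCoeff]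
  congr 2
  push_cast [dotProduct]
  rw [mul_sum, sum_mul]
  exact sum_congr rfl fun i _ => by ring

lemma norm_rieszCoeff (hw : 0 ≤ w) (hu : ∀ i, ‖u i‖ = 1) (ε : ι → ℤ) :
    ‖rieszCoeff w u ε‖ = w ^ signSize ε := by
  simp [rieszCoeff, signSize, norm_prod, hu, abs_of_nonneg hw, prod_pow_eq_pow_sum]

lemma rieszCoeff_zero : rieszCoeff w u 0 = 1 := by
  simp [rieszCoeff]

lemma rieszCoeff_single_neg_one [DecidableEq ι] (i : ι) :
    rieszCoeff w u (Pi.single i (-1)) = w * (u i)⁻¹ := by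
  rw [rieszCoeff, Fintype.prod_eq_single i fun j hj => by simp [hj]]
  simp

end RieszProduct

namespace QuasiIndependentFamily

variable {ι : Type*} [Fintype ι] [DecidableEq ι] {n : ι → ℤ}

lemma sum_rieszCoeff_dotProduct_eq_zero (hn : QuasiIndependentFamily n) (w : ℝ) (u : ι → ℂ) :
    ∑ ε ∈ signVectors ι with ε ⬝ᵥ n = 0, rieszCoeff w u ε = 1 := by
  have hzero : (signVectors ι).filter (· ⬝ᵥ n = 0) = {0} := by
    ext ε
    simp only [mem_filter, mem_singleton]
    constructor
    · rintro ⟨hε, h⟩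
      exact hn ε hε h
    · rintro rfl
      exact ⟨mem_signVectors.2 fun _ => by simp, zero_dotProduct n⟩
  rw [hzero, sum_singleton, rieszCoeff_zero]

lemma norm_sum_rieszCoeff_sub_le (hn : QuasiIndependentFamily n) {w : ℝ} {u : ι → ℂ}
    (hw₀ : 0 ≤ w) (hw : w ≤ 1 / 2) (hu : ∀ i, ‖u i‖ = 1) (i : ι) :
    ‖∑ ε ∈ signVectors ι with ε ⬝ᵥ n = -n i, rieszCoeff w u ε - w * (u i)⁻¹‖ ≤ 2 * w ^ 2 := by
  set S := (signVectors ι).filter (· ⬝ᵥ n = -n i)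
  set δ : ι → ℤ := Pi.single i (-1)
  have hδ : δ ∈ S := mem_filter.2
    ⟨single_mem_signVectors i (by norm_num), by rw [single_dotProduct, neg_one_mul]⟩
  have hkraft := sum_half_pow_signSize_le_one (filter_subset _ _) (hn.pairwise_signConflict (-n i))
  rw [← add_sum_erase _ _ hδ, show signSize δ = 1 by
    rw [signSize, Fintype.sum_eq_single i fun j hj => by simp [δ, hj]]; simp [δ]] at hkraft
  have hsize : ∀ ε ∈ S.erase δ, 2 ≤ signSize ε := by
    intro ε hε
    obtain ⟨hne, hεS⟩ := mem_erase.1 hε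
    obtain ⟨j, hj⟩ := hn.pairwise_signConflict (-n i) hεS hδ hne
    obtain rfl : j = i := by
      by_contra h
      simp [δ, h] at hj
    have hεj : ε j = 1 := by simpa [δ] using hj
    refine two_le_signSize n hεj ?_
    rw [(mem_filter.1 hεS).2]
    exact fun h => hn.ne_zero j (by omega)
  rw [← add_sum_erase _ _ hδ, rieszCoeff_single_neg_one, add_sub_cancel_left]
  calc ‖∑ ε ∈ S.erase δ, rieszCoeff w u ε‖
      ≤ ∑ ε ∈ S.erase δ, w ^ signSize ε :=
        (norm_sum_le _ _).trans_eq (sum_congr rfl fun ε _ => norm_rieszCoeff hw₀ hu ε)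
    _ ≤ ∑ ε ∈ S.erase δ, (2 * w) ^ 2 * (1 / 2) ^ signSize ε := by
        refine sum_le_sum fun ε hε => ?_
        rw [show w ^ signSize ε = (2 * w) ^ signSize ε * (1 / 2) ^ signSize ε by
          rw [← mul_pow]; ring_nf]
        gcongr ?_ * _
        exact pow_le_pow_of_le_one (by positivity) (by linarith) (hsize ε hε)
    _ ≤ 2 * w ^ 2 := by
        rw [← mul_sum]
        nlinarith

end QuasiIndependentFamily

theorem QuasiIndependentFamily.sum_norm_le {ι : Type*} [Fintype ι] [DecidableEq ι] {n : ι → ℤ}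
    (hn : QuasiIndependentFamily n) (a : ι → ℂ) {M : ℝ}
    (hM : ∀ t : ℝ, ‖∑ i, a i * exp (I * n i * t)‖ ≤ M) : ∑ i, ‖a i‖ ≤ 8 * M := by
  set u : ι → ℂ := fun i => exp (arg (a i) * I)
  have hu : ∀ i, ‖u i‖ = 1 := fun i => norm_exp_ofReal_mul_I _
  have hau : ∀ i, a i * (u i)⁻¹ = ‖a i‖ := fun i =>
    (mul_inv_eq_iff_eq_mul₀ (norm_ne_zero_iff.1 ((hu i).trans_ne one_ne_zero))).2
      (norm_mul_exp_arg_mul_I (a i)).symm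
  set c : ι → ℂ := fun i => ∑ ε ∈ signVectors ι with ε ⬝ᵥ n = -n i, rieszCoeff (1 / 4) u ε
  have hupper : ‖∑ i, a i * c i‖ ≤ M :=
    norm_sum_mul_coeff_neg_le_of_nonneg a n hM (signVectors ι) (rieszCoeff (1 / 4) u) (· ⬝ᵥ n)
      (rieszProduct (1 / 4) u n) (ofReal_rieszProduct hu n)
      (rieszProduct_nonneg (by norm_num) (by norm_num) (fun i => (hu i).le) n)
      (hn.sum_rieszCoeff_dotProduct_eq_zero _ u)
  have hmain : ∑ i, a i * (1 / 4 * (u i)⁻¹) = ((∑ i, ‖a i‖ / 4 : ℝ) : ℂ) := by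
    push_cast
    exact sum_congr rfl fun i _ => by rw [mul_left_comm, hau]; ring
  have herr : ‖∑ i, a i * (c i - 1 / 4 * (u i)⁻¹)‖ ≤ ∑ i, ‖a i‖ / 8 := by
    refine (norm_sum_le _ _).trans (sum_le_sum fun i _ => ?_)
    have := hn.norm_sum_rieszCoeff_sub_le (w := 1 / 4) (by norm_num) (by norm_num) hu i
    push_cast at this
    rw [norm_mul]
    nlinarith [norm_nonneg (a i)]
  have hsplit : ∑ i, a i * (1 / 4 * (u i)⁻¹) =
      ∑ i, a i * c i - ∑ i, a i * (c i - 1 / 4 * (u i)⁻¹) := by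
    rw [← sum_sub_distrib]
    exact sum_congr rfl fun i _ => by ring
  have hlower := norm_sub_le (∑ i, a i * c i) (∑ i, a i * (c i - 1 / 4 * (u i)⁻¹))
  rw [← hsplit, hmain, norm_real, Real.norm_of_nonneg (by positivity)] at hlower
  rw [← sum_div] at hlower herr
  linarith

/-- Every quasi-independent subset of `ℤ` is a Sidon set. -/
theorem isSidonSet_of_quasiIndependent (Λ : Set ℤ) (h : QuasiIndependent Λ) :
    IsSidonSet Λ := by
  refine ⟨8, fun F hF a => ?_⟩
  have hbound (t : ℝ) : ‖∑ l ∈ F, a l * exp (I * l * t)‖ ≤ ∑ l ∈ F, ‖a l‖ :=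
    (norm_sum_le _ _).trans_eq
      (sum_congr rfl fun l _ => by rw [norm_mul, norm_exp_I_mul_intCast_mul_ofReal, mul_one])
  have hsup (t : ℝ) := le_ciSup ⟨_, Set.forall_mem_range.2 hbound⟩ t
  rw [← sum_coe_sort]
  exact (h.quasiIndependentFamily hF).sum_norm_le (a ·) fun t => by
    rw [sum_coe_sort F fun l => a l * exp (I * l * t)]
    exact hsup t
end

section
/- If Λ ⊆ ℕ is a Sidon set, then |Λ ∩ [1, N]| = O(log N) as N → ∞. -/
open scoped BigOperators

/-- `Λ ⊆ ℕ` is a Sidon set (as a set of frequencies). -/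
def IsSidonSetNat (Λ : Set ℕ) : Prop :=
  ∃ C : ℝ, ∀ F : Finset ℕ, (F : Set ℕ) ⊆ Λ → ∀ a : ℕ → ℂ,
    ∑ l ∈ F, ‖a l‖ ≤
      C * ⨆ t : ℝ, ‖∑ l ∈ F, a l * Complex.exp (Complex.I * l * t)‖

/-!
Let `F = Λ ∩ [1, N]`. For signs `ε ∈ {±1}^F` chosen at random, `∑ ε_l u_l` has exponential
moment `E exp (θ ∑ ε_l u_l) = ∏ cosh (θ u_l) ≤ exp (θ² |F| / 2)` when `|u_l| ≤ 1`, so a union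
bound over the real parts of `i^k P_ε(2πj/N²)`, `k < 4`, `j < N²`, yields signs with
`|P_ε| ≤ θ |F| + 2 log (4N²) / θ` on that grid, where `P_ε(t) = ∑ ε_l e^{ilt}`. Since `P_ε` is
`|F| N`-Lipschitz, the bound holds everywhere up to `2π`. The Sidon inequality gives
`|F| ≤ C (θ |F| + 8 log N / θ + 2π)`, and `θ = 1 / (2C)` yields `|F| ≤ (32 C² + 8πC) log N`.
-/

open Finset Real

section Signs

variable {α ι : Type*} [DecidableEq α]

lemma sum_powerset_exp_sum_sign_mul (F : Finset α) (v : α → ℝ) :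
    ∑ σ ∈ F.powerset, exp (∑ l ∈ F, (if l ∈ σ then 1 else -1) * v l) =
      ∏ l ∈ F, (exp (v l) + exp (-v l)) := by
  rw [prod_add]
  refine sum_congr rfl fun σ hσ => ?_
  rw [exp_sum, ← prod_sdiff (mem_powerset.mp hσ), mul_comm]
  congr 1
  · exact prod_congr rfl fun l hl => by rw [if_pos hl, one_mul]
  · exact prod_congr rfl fun l hl => by rw [if_neg (mem_sdiff.mp hl).2, neg_one_mul]

lemma exp_add_exp_neg_le (x : ℝ) : exp x + exp (-x) ≤ 2 * exp (x ^ 2 / 2) := by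
  have := cosh_le_exp_half_sq x
  rw [cosh_eq] at this
  linarith

lemma exists_sign_forall_sum_mul_le [Fintype ι] [Nonempty ι] (F : Finset α)
    (u : ι → α → ℝ) (hu : ∀ j l, |u j l| ≤ 1) {θ : ℝ} (hθ : 0 < θ) :
    ∃ ε : α → ℝ, (∀ l, |ε l| = 1) ∧
      ∀ j, ∑ l ∈ F, ε l * u j l ≤ θ * #F / 2 + log (Fintype.card ι) / θ := by
  set S : Finset α → ι → ℝ := fun σ j => ∑ l ∈ F, (if l ∈ σ then 1 else -1) * u j l
  have hmoment (j : ι) :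
      ∑ σ ∈ F.powerset, exp (θ * S σ j) ≤ 2 ^ #F * exp (#F * (θ ^ 2 / 2)) :=
    calc ∑ σ ∈ F.powerset, exp (θ * S σ j)
        = ∏ l ∈ F, (exp (θ * u j l) + exp (-(θ * u j l))) := by
          simp only [S, mul_sum, mul_left_comm θ]
          exact sum_powerset_exp_sum_sign_mul F _
      _ ≤ ∏ _l ∈ F, 2 * exp (θ ^ 2 / 2) := by
          refine prod_le_prod (fun l _ => by positivity) fun l _ => ?_
          have : (θ * u j l) ^ 2 ≤ θ ^ 2 := by
            rw [mul_pow, ← sq_abs (u j l)]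
            exact mul_le_of_le_one_right (sq_nonneg θ) (pow_le_one₀ (abs_nonneg _) (hu j l))
          exact (exp_add_exp_neg_le _).trans (by gcongr)
      _ = 2 ^ #F * exp (#F * (θ ^ 2 / 2)) := by rw [prod_const, mul_pow, exp_nat_mul]
  set c := Fintype.card ι * exp (#F * (θ ^ 2 / 2))
  have htotal : ∑ σ ∈ F.powerset, ∑ j, exp (θ * S σ j) ≤ ∑ _σ ∈ F.powerset, c := by
    rw [sum_comm, sum_const, card_powerset, nsmul_eq_mul]
    calc ∑ j, ∑ σ ∈ F.powerset, exp (θ * S σ j)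
        ≤ ∑ _j : ι, 2 ^ #F * exp (#F * (θ ^ 2 / 2)) := sum_le_sum fun j _ => hmoment j
      _ = (2 ^ #F : ℕ) * c := by
          simp only [sum_const, card_univ, nsmul_eq_mul, c]
          push_cast
          ring
  obtain ⟨σ, -, hσ⟩ := exists_le_of_sum_le ⟨∅, empty_mem_powerset F⟩ htotal
  refine ⟨fun l => if l ∈ σ then 1 else -1, fun l => by beta_reduce; split_ifs <;> simp,
    fun j => ?_⟩
  have hj : θ * S σ j ≤ log (Fintype.card ι) + #F * (θ ^ 2 / 2) := by
    rw [← exp_le_exp, exp_add, exp_log (by exact_mod_cast Fintype.card_pos)]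
    exact (single_le_sum (f := fun j => exp (θ * S σ j)) (fun j _ => (exp_pos _).le)
      (mem_univ j)).trans hσ
  refine le_of_mul_le_mul_left (hj.trans_eq ?_) hθ
  field_simp
  ring

end Signs

lemma Complex.norm_exp_I_mul_ofReal_sub_exp_I_mul_ofReal_le (x y : ℝ) :
    ‖exp (I * x) - exp (I * y)‖ ≤ |x - y| := by
  have : exp (I * x) - exp (I * y) = exp (I * y) * (exp (I * ↑(x - y)) - 1) := by
    rw [mul_sub, mul_one, ← exp_add]
    push_cast
    ring_nf
  rw [this, norm_mul, norm_exp_I_mul_ofReal, one_mul]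
  exact norm_exp_I_mul_ofReal_sub_one_le

lemma Complex.norm_exp_I_mul_natCast_mul_ofReal (l : ℕ) (t : ℝ) :
    ‖exp (I * l * t)‖ = 1 := by
  rw [mul_assoc, ← ofReal_natCast, ← ofReal_mul, norm_exp_I_mul_ofReal]

noncomputable def trigSum (F : Finset ℕ) (a : ℕ → ℂ) (t : ℝ) : ℂ :=
  ∑ l ∈ F, a l * Complex.exp (Complex.I * l * t)

section TrigSum

variable (F : Finset ℕ) (a : ℕ → ℂ)

lemma trigSum_add_int_mul_two_pi (t : ℝ) (k : ℤ) :
    trigSum F a (t + 2 * π * k) = trigSum F a t := by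
  refine sum_congr rfl fun l _ => ?_
  have : Complex.I * l * ↑(t + 2 * π * k) =
      Complex.I * l * t + (l * k : ℤ) * (2 * π * Complex.I) := by
    push_cast
    ring
  rw [this, Complex.exp_add, Complex.exp_int_mul_two_pi_mul_I, mul_one]

variable {F a} {N : ℕ}

lemma norm_trigSum_sub_le (ha : ∀ l, ‖a l‖ ≤ 1) (hF : ∀ l ∈ F, l ≤ N) (s t : ℝ) :
    ‖trigSum F a t - trigSum F a s‖ ≤ #F * N * |t - s| := by
  rw [trigSum, trigSum, ← sum_sub_distrib, mul_assoc, ← nsmul_eq_mul, ← sum_const]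
  refine (norm_sum_le _ _).trans (sum_le_sum fun l hl => ?_)
  have hexp (x : ℝ) : Complex.I * l * x = Complex.I * ↑(l * x) := by push_cast; ring
  rw [← mul_sub, norm_mul, hexp, hexp]
  calc ‖a l‖ * ‖Complex.exp (Complex.I * ↑(l * t)) - Complex.exp (Complex.I * ↑(l * s))‖
      ≤ 1 * |l * t - l * s| :=
        mul_le_mul (ha l) (Complex.norm_exp_I_mul_ofReal_sub_exp_I_mul_ofReal_le _ _)
          (norm_nonneg _) zero_le_one
    _ ≤ N * |t - s| := by
        rw [one_mul, ← mul_sub, abs_mul, Nat.abs_cast]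
        gcongr
        exact_mod_cast hF l hl

lemma norm_trigSum_le_of_forall_grid {M : ℕ} (hM : 0 < M) (ha : ∀ l, ‖a l‖ ≤ 1)
    (hF : ∀ l ∈ F, l ≤ N) {D : ℝ} (hgrid : ∀ j : Fin M, ‖trigSum F a (2 * π * j / M)‖ ≤ D)
    (t : ℝ) : ‖trigSum F a t‖ ≤ D + #F * N * (2 * π / M) := by
  have hM' : (0 : ℝ) < M := by exact_mod_cast hM
  set j : ℤ := ⌊t * M / (2 * π)⌋
  have hj : |t - 2 * π * j / M| ≤ 2 * π / M := by
    have h1 := Int.floor_le (t * M / (2 * π))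
    have h2 := Int.lt_floor_add_one (t * M / (2 * π))
    rw [le_div_iff₀ (by positivity)] at h1
    rw [div_lt_iff₀ (by positivity)] at h2
    have : t - 2 * π * j / M = (t * M - 2 * π * j) / M := by field_simp
    rw [this, abs_div, Nat.abs_cast, abs_of_nonneg (by linarith)]
    gcongr
    linarith
  have hMz : (0 : ℤ) < M := by exact_mod_cast hM
  obtain ⟨r, hr⟩ := Int.eq_ofNat_of_zero_le (Int.emod_nonneg j hMz.ne')
  have hrM : r < M := by
    have := Int.emod_lt_of_pos j hMz
    omega
  have hperiod :
      trigSum F a (2 * π * (⟨r, hrM⟩ : Fin M) / M) = trigSum F a (2 * π * j / M) := by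
    rw [← trigSum_add_int_mul_two_pi F a _ (j / M)]
    congr 1
    have hjr : (j : ℝ) = r + M * (j / (M : ℤ) : ℤ) := by
      exact_mod_cast (hr ▸ Int.emod_add_mul_ediv j M).symm
    rw [hjr]
    field_simp
  calc ‖trigSum F a t‖
      ≤ ‖trigSum F a (2 * π * j / M)‖ + ‖trigSum F a t - trigSum F a (2 * π * j / M)‖ :=
        norm_le_insert' _ _
    _ ≤ D + #F * N * (2 * π / M) := by
        gcongr
        · exact hperiod ▸ hgrid _
        · exact (norm_trigSum_sub_le ha hF _ _).trans (by gcongr)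

end TrigSum

lemma Complex.norm_le_two_mul_of_forall_re_I_pow_mul_le {z : ℂ} {B : ℝ}
    (h : ∀ k : Fin 4, (I ^ (k : ℕ) * z).re ≤ B) : ‖z‖ ≤ 2 * B := by
  have hre : z.re ≤ B := by simpa using h 0
  have him : -z.im ≤ B := by simpa using h 1
  have hre' : -z.re ≤ B := by simpa using h 2
  have him' : z.im ≤ B := by simpa using h 3
  refine (norm_le_abs_re_add_abs_im z).trans ?_
  rw [two_mul]
  gcongr <;> rw [abs_le] <;> constructor <;> linarith

lemma exists_sign_norm_trigSum_le (F : Finset ℕ) {N M : ℕ} (hF : ∀ l ∈ F, l ≤ N) (hM : 0 < M)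
    {θ : ℝ} (hθ : 0 < θ) :
    ∃ ε : ℕ → ℝ, (∀ l, |ε l| = 1) ∧ ∀ t, ‖trigSum F (fun l => ε l) t‖ ≤
      θ * #F + 2 * log (4 * M) / θ + #F * N * (2 * π / M) := by
  have : Nonempty (Fin M) := ⟨⟨0, hM⟩⟩
  let u : Fin M × Fin 4 → ℕ → ℝ := fun p l =>
    (Complex.I ^ (p.2 : ℕ) * Complex.exp (Complex.I * l * ↑(2 * π * p.1 / M))).re
  have hu (p l) : |u p l| ≤ 1 := (Complex.abs_re_le_norm _).trans (by
    rw [norm_mul, norm_pow, Complex.norm_I, one_pow, one_mul,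
      Complex.norm_exp_I_mul_natCast_mul_ofReal])
  obtain ⟨ε, hε, hsum⟩ := exists_sign_forall_sum_mul_le F u hu hθ
  refine ⟨ε, hε, fun t => ?_⟩
  have hgrid (j : Fin M) : ‖trigSum F (fun l => ε l) (2 * π * j / M)‖ ≤
      2 * (θ * #F / 2 + log (Fintype.card (Fin M × Fin 4)) / θ) := by
    refine Complex.norm_le_two_mul_of_forall_re_I_pow_mul_le fun k => ?_
    calc (Complex.I ^ (k : ℕ) * trigSum F (fun l => ε l) (2 * π * j / M)).re
        = ∑ l ∈ F, ε l * u (j, k) l := by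
          simp only [trigSum, mul_sum, Complex.re_sum, u]
          refine sum_congr rfl fun l _ => ?_
          rw [mul_left_comm, Complex.re_ofReal_mul]
      _ ≤ _ := hsum (j, k)
  refine (norm_trigSum_le_of_forall_grid hM (fun l => by simp [hε]) hF hgrid t).trans_eq ?_
  simp only [Fintype.card_prod, Fintype.card_fin]
  push_cast
  rw [mul_comm (M : ℝ)]
  ring

lemma exists_sign_norm_trigSum_le_of_subset_Icc {F : Finset ℕ} {N : ℕ} (hF : F ⊆ Icc 1 N)
    (hN : 2 ≤ N) {θ : ℝ} (hθ : 0 < θ) :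
    ∃ ε : ℕ → ℝ, (∀ l, |ε l| = 1) ∧
      ∀ t, ‖trigSum F (fun l => ε l) t‖ ≤ θ * #F + 8 * log N / θ + 2 * π := by
  obtain ⟨ε, hε, hbound⟩ := exists_sign_norm_trigSum_le F (M := N ^ 2)
    (fun l hl => (mem_Icc.mp (hF hl)).2) (by positivity) hθ
  refine ⟨ε, hε, fun t => (hbound t).trans ?_⟩
  have hN' : (2 : ℝ) ≤ N := by exact_mod_cast hN
  have hlog : log (4 * ((N ^ 2 : ℕ) : ℝ)) ≤ 4 * log N :=
    calc log (4 * ((N ^ 2 : ℕ) : ℝ)) ≤ log ((N : ℝ) ^ 4) := by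
          gcongr
          push_cast
          nlinarith [mul_le_mul hN' hN' zero_le_two (by positivity : (0 : ℝ) ≤ N)]
      _ = 4 * log N := by rw [log_pow]; norm_num
  have herr : (#F : ℝ) * N * (2 * π / ((N ^ 2 : ℕ) : ℝ)) ≤ 2 * π := by
    have hcard : (#F : ℝ) ≤ N := by exact_mod_cast (card_le_card hF).trans (by simp)
    rw [Nat.cast_pow, mul_div_assoc', div_le_iff₀ (by positivity)]
    have := mul_le_mul_of_nonneg_right hcard (by positivity : (0 : ℝ) ≤ N * (2 * π))
    nlinarith
  have : 2 * log (4 * ((N ^ 2 : ℕ) : ℝ)) / θ ≤ 8 * log N / θ :=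
    div_le_div_of_nonneg_right (by linarith) hθ.le
  linarith

lemma IsSidonSetNat.exists_pos_sum_norm_le {Λ : Set ℕ} (h : IsSidonSetNat Λ) :
    ∃ C > 0, ∀ F : Finset ℕ, (F : Set ℕ) ⊆ Λ → ∀ (a : ℕ → ℂ) (B : ℝ),
      (∀ t, ‖trigSum F a t‖ ≤ B) → ∑ l ∈ F, ‖a l‖ ≤ C * B := by
  obtain ⟨C, hC⟩ := h
  refine ⟨max C 1, by positivity, fun F hF a B hB => (hC F hF a).trans ?_⟩
  calc C * ⨆ t : ℝ, ‖trigSum F a t‖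
      ≤ max C 1 * ⨆ t : ℝ, ‖trigSum F a t‖ :=
        mul_le_mul_of_nonneg_right (le_max_left _ _) (iSup_nonneg fun _ => norm_nonneg _)
    _ ≤ max C 1 * B := by
        gcongr
        exact ciSup_le hB

/-- If `Λ ⊆ ℕ` is a Sidon set then `|Λ ∩ [1, N]| = O(log N)`. -/
theorem sidon_count_le_log (Λ : Set ℕ) [DecidablePred (· ∈ Λ)] (h : IsSidonSetNat Λ) :
    ∃ K : ℝ, ∀ N : ℕ, 2 ≤ N →
      (((Finset.Icc 1 N).filter (fun n => n ∈ Λ)).card : ℝ) ≤ K * Real.log N := by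
  obtain ⟨C, hC, hsidon⟩ := h.exists_pos_sum_norm_le
  refine ⟨32 * C ^ 2 + 8 * π * C, fun N hN => ?_⟩
  set F := (Finset.Icc 1 N).filter (fun n => n ∈ Λ)
  obtain ⟨ε, hε, hbound⟩ :=
    exists_sign_norm_trigSum_le_of_subset_Icc (F := F) (filter_subset _ _) hN (θ := 1 / (2 * C))
      (by positivity)
  have hcard := hsidon F (fun l hl => (mem_filter.mp hl).2) _ _ hbound
  simp only [Complex.norm_real, norm_eq_abs, hε, sum_const, nsmul_one] at hcard
  have hexpand : C * (1 / (2 * C) * #F + 8 * log N / (1 / (2 * C)) + 2 * π) =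
      #F / 2 + 16 * C ^ 2 * log N + 2 * π * C := by
    field_simp
    ring
  have hlogN : 1 / 2 ≤ log N := by
    linarith [log_two_gt_d9, log_le_log two_pos (by exact_mod_cast hN : (2 : ℝ) ≤ N)]
  linarith [mul_le_mul_of_nonneg_left hlogN (by positivity : 0 ≤ 4 * π * C)]
end

section
/- The sequence Y_N = ∫_I ∏_{n=1}^N f(nt)^{ξ_n} exp(-(α/n)(f(nt) - 1)) dt is a nonnegative martingale with respect to the filtration generated by ξ_1, ..., ξ_N, where ξ_n are independent Poisson variables of parameters α/n and f is a fixed bounded nonnegative function on the circle with ∫ f = 1. -/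
open MeasureTheory ProbabilityTheory Finset Real
open scoped NNReal Nat

/-!
For fixed `t`, the factors `f(nt)^{ξ_n} exp(-(α/n)(f(nt) - 1))` are independent with mean one,
since a Poisson variable of parameter `λ` has `E[c^ξ] = exp(λ(c - 1))`; hence their partial
products form a martingale. The bound `f ≤ B` dominates these products, uniformly in `t`, by the
integrable product of the independent variables `B^{ξ_n} exp(α/n)`, so Fubini's theorem lets the
martingale property be integrated over `t ∈ I`.
-/

namespace ProbabilityTheory

lemma hasSum_poissonMeasure_mul_pow (r : ℝ≥0) (c : ℝ) :
    HasSum (fun n ↦ exp (-r) * r ^ n / n ! * c ^ n) (exp (r * (c - 1))) := by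
  convert! (NormedSpace.expSeries_div_hasSum_exp ((r : ℝ) * c)).mul_left (exp (-r)) using 1
  · ext n
    ring
  · rw [← exp_eq_exp_ℝ, ← exp_add]
    ring_nf

lemma integrable_pow_poissonMeasure (r : ℝ≥0) (c : ℝ) :
    Integrable (fun n : ℕ ↦ c ^ n) (poissonMeasure r) := by
  rw [integrable_poissonMeasure_iff]
  simpa only [norm_pow, Real.norm_eq_abs] using (hasSum_poissonMeasure_mul_pow r |c|).summable

lemma integral_pow_poissonMeasure (r : ℝ≥0) (c : ℝ) :
    ∫ n, c ^ n ∂poissonMeasure r = exp (r * (c - 1)) := by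
  rw [integral_poissonMeasure]
  exact (hasSum_poissonMeasure_mul_pow r c).tsum_eq

lemma integral_pow_mul_exp_poissonMeasure (r : ℝ≥0) (c : ℝ) :
    ∫ n, c ^ n * exp (-r * (c - 1)) ∂poissonMeasure r = 1 := by
  rw [integral_mul_const, integral_pow_poissonMeasure, ← exp_add]
  simp

lemma HasLaw.integrable_pow_poisson {Ω : Type*} {mΩ : MeasurableSpace Ω} {μ : Measure Ω}
    {X : Ω → ℕ} {r : ℝ≥0} (hX : HasLaw X (poissonMeasure r) μ) (c : ℝ) :
    Integrable (fun ω ↦ c ^ X ω) μ :=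
  (hX.map_eq ▸ integrable_pow_poissonMeasure r c).comp_aemeasurable hX.aemeasurable

lemma HasLaw.integral_pow_mul_exp_poisson {Ω : Type*} {mΩ : MeasurableSpace Ω}
    {μ : Measure Ω} {X : Ω → ℕ} {r : ℝ≥0} (hX : HasLaw X (poissonMeasure r) μ) (c : ℝ) :
    ∫ ω, c ^ X ω * exp (-r * (c - 1)) ∂μ = 1 :=
  (hX.integral_comp (f := fun n ↦ c ^ n * exp (-r * (c - 1))) .of_discrete).trans
    (integral_pow_mul_exp_poissonMeasure r c)

variable {Ω : Type*} {mΩ : MeasurableSpace Ω} {μ : Measure Ω}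

lemma iIndepFun.integrable_prod_range [IsFiniteMeasure μ] {Z : ℕ → Ω → ℝ} (hZ : iIndepFun Z μ)
    (hint : ∀ n, Integrable (Z n) μ) (N : ℕ) :
    Integrable (fun ω ↦ ∏ n ∈ range N, Z n ω) μ := by
  induction N with
  | zero => simp
  | succ N ih =>
    simp_rw [prod_range_succ]
    have hindep := hZ.indepFun_prod_range_succ₀ (fun n ↦ (hint n).aemeasurable) N
    rw [← prod_fn] at ih
    convert hindep.integrable_mul ih (hint N) using 1
    ext ω
    simp [prod_apply]

lemma martingale_integral {T : Type*} [MeasurableSpace T] {ν : Measure T} [SFinite ν]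
    [IsFiniteMeasure μ] {ℱ : Filtration ℕ mΩ} {M : T → ℕ → Ω → ℝ}
    (hM : ∀ t, Martingale (M t) ℱ μ)
    (hadapted : ∀ N, StronglyMeasurable[(ℱ N).prod ‹_›] fun p : Ω × T ↦ M p.2 N p.1)
    (hint : ∀ N, Integrable (fun p : Ω × T ↦ M p.2 N p.1) (μ.prod ν)) :
    Martingale (fun N ω ↦ ∫ t, M t N ω ∂ν) ℱ μ := by
  refine martingale_of_setIntegral_eq_succ
    (fun N ↦ @StronglyMeasurable.integral_prod_right' _ _ _ (ℱ N) _ _ _ _ _ _ (hadapted N))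
    (fun N ↦ (hint N).integral_prod_left) fun N s hs ↦ ?_
  have hswap (K : ℕ) : ∫ ω in s, ∫ t, M t K ω ∂ν ∂μ = ∫ t, ∫ ω in s, M t K ω ∂μ ∂ν := by
    refine integral_integral_swap ?_
    rw [← Measure.restrict_univ (μ := ν), Measure.prod_restrict]
    exact (hint K).restrict
  rw [hswap, hswap]
  congr with t
  exact (hM t).setIntegral_eq N.le_succ hs

variable {β : Type*} [MeasurableSpace β] {ξ : ℕ → Ω → β}

lemma measurable_prod_range_uncurry {T : Type*} [MeasurableSpace T] {g : ℕ → T → β → ℝ}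
    {m : MeasurableSpace Ω} (hg : ∀ n, Measurable (Function.uncurry (g n))) {N : ℕ}
    (hξ : ∀ n < N, Measurable[m] (ξ n)) :
    Measurable[m.prod ‹_›] fun p : Ω × T ↦ ∏ n ∈ range N, g n p.2 (ξ n p.1) :=
  Finset.measurable_prod _ fun n hn ↦
    (hg n).comp (measurable_snd.prodMk ((hξ n (mem_range.mp hn)).comp measurable_fst))

variable [TopologicalSpace β] [TopologicalSpace.MetrizableSpace β] [BorelSpace β]

lemma iIndepFun.indep_natural_comap (hmeas : ∀ n, StronglyMeasurable (ξ n))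
    (hindep : iIndepFun ξ μ) {i j : ℕ} (hij : i < j) :
    Indep (Filtration.natural ξ hmeas i) (MeasurableSpace.comap (ξ j) ‹_›) μ := by
  have h := indep_iSup_of_disjoint (fun n ↦ (hmeas n).measurable.comap_le) hindep.iIndep
    (S := Set.Iic i) (T := {j}) (by simpa using hij.not_ge)
  simp only [Set.mem_singleton_iff, iSup_iSup_eq_left] at h
  exact h

lemma measurable_natural_of_le (hmeas : ∀ n, StronglyMeasurable (ξ n)) {n N : ℕ} (hnN : n ≤ N) :
    Measurable[Filtration.natural ξ hmeas N] (ξ n) :=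
  ((Filtration.stronglyAdapted_natural hmeas n).mono
    ((Filtration.natural ξ hmeas).mono hnN)).measurable

lemma martingale_prod_range_succ [IsFiniteMeasure μ] (hmeas : ∀ n, StronglyMeasurable (ξ n))
    (hindep : iIndepFun ξ μ) {h : ℕ → β → ℝ}
    (hh : ∀ n, Measurable (h n)) (hint : ∀ n, Integrable (fun ω ↦ h n (ξ n ω)) μ)
    (hmean : ∀ n, ∫ ω, h n (ξ n ω) ∂μ = 1) :
    Martingale (fun N ω ↦ ∏ n ∈ range (N + 1), h n (ξ n ω)) (Filtration.natural ξ hmeas) μ := by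
  set ℱ := Filtration.natural ξ hmeas
  have hadapted : StronglyAdapted ℱ fun N ω ↦ ∏ n ∈ range (N + 1), h n (ξ n ω) := fun N ↦
    (Finset.measurable_prod _ fun n hn ↦ (hh n).comp
      (measurable_natural_of_le hmeas (Nat.lt_succ_iff.mp (mem_range.mp hn)))).stronglyMeasurable
  have hprod_int (N : ℕ) : Integrable (fun ω ↦ ∏ n ∈ range N, h n (ξ n ω)) μ :=
    (hindep.comp h hh).integrable_prod_range hint N
  refine martingale_nat hadapted (fun N ↦ hprod_int (N + 1)) fun N ↦ ?_
  have hsucc : (fun ω ↦ ∏ n ∈ range (N + 1 + 1), h n (ξ n ω)) =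
      (fun ω ↦ ∏ n ∈ range (N + 1), h n (ξ n ω)) * fun ω ↦ h (N + 1) (ξ (N + 1) ω) := by
    ext ω
    exact prod_range_succ _ _
  have hnext : μ[fun ω ↦ h (N + 1) (ξ (N + 1) ω) | ℱ N] =ᵐ[μ] fun _ ↦ 1 := by
    rw [← hmean (N + 1)]
    exact condExp_indep_eq (hmeas (N + 1)).measurable.comap_le (ℱ.le N)
      ((hh (N + 1)).comp (comap_measurable _)).stronglyMeasurable
      (hindep.indep_natural_comap hmeas N.lt_succ_self).symm
  rw [hsucc]
  filter_upwards [condExp_mul_of_stronglyMeasurable_left (hadapted N)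
    (hsucc ▸ hprod_int (N + 2)) (hint (N + 1)), hnext] with ω hmul hone
  rw [hmul, Pi.mul_apply, hone, mul_one]

lemma martingale_integral_prod_range_succ [IsFiniteMeasure μ]
    (hmeas : ∀ n, StronglyMeasurable (ξ n)) (hindep : iIndepFun ξ μ)
    {T : Type*} [MeasurableSpace T] {ν : Measure T} [IsFiniteMeasure ν] {g : ℕ → T → β → ℝ}
    (hg : ∀ n, Measurable (Function.uncurry (g n))) {D : ℕ → β → ℝ} (hD : ∀ n, Measurable (D n))
    (hDint : ∀ n, Integrable (fun ω ↦ D n (ξ n ω)) μ) (hgD : ∀ n t b, |g n t b| ≤ D n b)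
    (hmean : ∀ n t, ∫ ω, g n t (ξ n ω) ∂μ = 1) :
    Martingale (fun N ω ↦ ∫ t, ∏ n ∈ range (N + 1), g n t (ξ n ω) ∂ν)
      (Filtration.natural ξ hmeas) μ := by
  have hg_section (n : ℕ) (t : T) : Measurable (g n t) := (hg n).comp measurable_prodMk_left
  have hgint (n : ℕ) (t : T) : Integrable (fun ω ↦ g n t (ξ n ω)) μ :=
    (hDint n).mono' ((hg_section n t).comp (hmeas n).measurable).aestronglyMeasurable
      (ae_of_all _ fun ω ↦ hgD n t _)
  refine martingale_integral (fun t ↦ martingale_prod_range_succ hmeas hindep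
      (hg_section · t) (hgint · t) (hmean · t))
    (fun N ↦ (measurable_prod_range_uncurry hg fun n hn ↦
      measurable_natural_of_le hmeas (Nat.lt_succ_iff.mp hn)).stronglyMeasurable) fun N ↦ ?_
  refine (((hindep.comp D hD).integrable_prod_range hDint (N + 1)).comp_fst ν).mono'
    (measurable_prod_range_uncurry hg fun n _ ↦ (hmeas n).measurable).aestronglyMeasurable
    (ae_of_all _ fun p ↦ ?_)
  rw [Real.norm_eq_abs, abs_prod]
  exact prod_le_prod (fun _ _ ↦ abs_nonneg _) fun n _ ↦ hgD n p.2 _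

end ProbabilityTheory

theorem random_product_integral_is_martingale_general
    {Ω : Type*} [MeasurableSpace Ω] (μ : Measure Ω) [IsProbabilityMeasure μ]
    (α : ℝ) (hα : 0 < α)
    (ξ : ℕ → Ω → ℕ) (hmeas : ∀ n, StronglyMeasurable (ξ n))
    (hindep : iIndepFun ξ μ)
    (hdist : ∀ n : ℕ, μ.map (ξ n) = poissonMeasure (⟨α, hα.le⟩ / ((n : NNReal) + 1)))
    (f : ℝ → ℝ) (hfmeas : Measurable f) (hf0 : ∀ t, 0 ≤ f t)
    (hfbdd : ∃ B : ℝ, ∀ t, f t ≤ B)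
    (I : Set ℝ) (hI' : I ⊆ Set.Icc 0 1)
    (Y : ℕ → Ω → ℝ)
    (hY : ∀ N ω, Y N ω = ∫ t in I, ∏ n ∈ Finset.range N,
      (f ((n + 1) * t)) ^ (ξ n ω) *
        Real.exp (-(α / (n + 1)) * (f ((n + 1) * t) - 1)) ∂volume) :
    (∀ N ω, 0 ≤ Y N ω) ∧
      Martingale (fun N => Y (N + 1)) (Filtration.natural ξ hmeas) μ := by
  obtain ⟨B, hB⟩ := hfbdd
  set r : ℕ → ℝ≥0 := fun n ↦ ⟨α, hα.le⟩ / ((n : ℝ≥0) + 1)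
  have hr (n : ℕ) : (r n : ℝ) = α / (n + 1) := rfl
  have hlaw (n : ℕ) : HasLaw (ξ n) (poissonMeasure (r n)) μ :=
    ⟨(hmeas n).measurable.aemeasurable, hdist n⟩
  have hfactor_nonneg (n : ℕ) (t : ℝ) (k : ℕ) :
      0 ≤ f ((n + 1) * t) ^ k * exp (-(α / (n + 1)) * (f ((n + 1) * t) - 1)) := by
    have := hf0 ((n + 1) * t)
    positivity
  refine ⟨fun N ω ↦ hY N ω ▸ integral_nonneg fun t ↦ prod_nonneg fun n _ ↦ hfactor_nonneg n t _, ?_⟩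
  have : IsFiniteMeasure (volume.restrict I) :=
    ⟨by simpa using (measure_mono hI').trans_lt measure_Icc_lt_top⟩
  convert martingale_integral_prod_range_succ hmeas hindep (ν := volume.restrict I)
    (g := fun n t k ↦ f ((n + 1) * t) ^ k * exp (-(α / (n + 1)) * (f ((n + 1) * t) - 1)))
    (D := fun n k ↦ B ^ k * exp (r n)) (by fun_prop) (fun n ↦ measurable_from_nat)
    (fun n ↦ ((hlaw n).integrable_pow_poisson B).mul_const _) ?_ ?_ using 2 with N
  · exact funext (hY (N + 1))
  · intro n t k
    have hc := hf0 ((n + 1) * t)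
    have ha : 0 ≤ α / (n + 1) := by positivity
    rw [abs_of_nonneg (hfactor_nonneg n t k), hr]
    refine mul_le_mul (pow_le_pow_left₀ hc (hB _) k) (exp_le_exp.mpr ?_) (exp_nonneg _)
      (pow_nonneg (hc.trans (hB _)) k)
    nlinarith [mul_nonneg ha hc]
  · intro n t
    simpa [hr] using (hlaw n).integral_pow_mul_exp_poisson (f ((n + 1) * t))

/-- With `ξ n` independent Poisson variables of parameters `α/(n+1)` (so `ξ 0, ξ 1, …`
play the role of `ξ_1, ξ_2, …`), `f` a bounded nonnegative `1`-periodic function with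
`∫_𝕋 f = 1`, and `I` an interval of the circle, the sequence
`Y N = ∫_I ∏_{n=1}^N f(nt)^{ξ_n} exp(-(α/n)(f(nt)-1)) dt` is a nonnegative martingale
for the filtration generated by `ξ_1, …, ξ_N`. -/
theorem random_product_integral_is_martingale
    {Ω : Type*} [MeasurableSpace Ω] (μ : Measure Ω) [IsProbabilityMeasure μ]
    (α : ℝ) (hα : 0 < α)
    (ξ : ℕ → Ω → ℕ) (hmeas : ∀ n, StronglyMeasurable (ξ n))
    (hindep : iIndepFun ξ μ)
    (hdist : ∀ n : ℕ, μ.map (ξ n) = poissonMeasure (⟨α, hα.le⟩ / ((n : NNReal) + 1)))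
    (f : ℝ → ℝ) (hfmeas : Measurable f) (hf0 : ∀ t, 0 ≤ f t)
    (hfper : Function.Periodic f 1) (hfbdd : ∃ B : ℝ, ∀ t, f t ≤ B)
    (hfint : ∫ t in (0:ℝ)..1, f t = 1)
    (I : Set ℝ) (hI : MeasurableSet I) (hI' : I ⊆ Set.Icc 0 1)
    (Y : ℕ → Ω → ℝ)
    (hY : ∀ N ω, Y N ω = ∫ t in I, ∏ n ∈ Finset.range N,
      (f ((n + 1) * t)) ^ (ξ n ω) *
        Real.exp (-(α / (n + 1)) * (f ((n + 1) * t) - 1)) ∂volume) :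
    (∀ N ω, 0 ≤ Y N ω) ∧
      Martingale (fun N => Y (N + 1)) (Filtration.natural ξ hmeas) μ :=
  random_product_integral_is_martingale_general μ α hα ξ hmeas hindep hdist f hfmeas hf0 hfbdd I hI'
    Y hY
end
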